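/- arXiv:1110.2505 — 2 statements merged into one kernel-verified Lean document; each statement's English description precedes it below -/
import Mathlib

section
/- Theorem 2.1 (push-forwards on projective towers, full version with auxiliary variables, stated coefficient-wise): Let a formal push-forward tower with Segre data satisfy the Segre assumption, and for each 1 ≤ i ≤ k let A_i be a finite set and n_{i,u} a nonnegative integer for each u ∈ A_i. Then for all nonnegative integers n_1, …, n_k, the element (P_1 ∘ P_2 ∘ ⋯ ∘ P_k)( Π_{i=1}^{k} c_i^{ n_i + Σ_{u ∈ A_i} n_{i,u} } ) of R_0 equals the sum, over all tuples of integers (d_{i,m})_{1 ≤ i ≤ k, m ∈ M_i} and vectors (β_{i,m})_{1 ≤ i ≤ k, m ∈ M_i} with β_{i,m} ∈ ℕ^{i−1}, subject to the constraints that for every i one has Σ_{m ∈ M_i} (d_{i,m} − |β_{i,m}|) + Σ_{i' > i} Σ_{m ∈ M_{i'}} β^{i}_{i',m} + Σ_{u ∈ A_i} n_{i,u} = −n_i − 1, of the products Π_{i=1}^{k} Π_{m ∈ M_i} q_{m, d_{i,m}} · C(d_{i,m}, β_{i,m}) · Π_{j=1}^{i−1} (m^j)^{β^j_{i,m}}; moreover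 only finitely many tuples contribute a nonzero term. This is the coefficient-wise form of the identity π_* Π_{i=1}^{k} ( (u_i − c_i)^{−1} Π_{u ∈ A_i} (u − c_i)^{−1} ) = [ Π_{i=1}^{k} Π_{m ∈ M_i} Q_m(u_i + m^{i−1} u_{i−1} + ⋯ + m^1 u_1) Π_{u ∈ A_i} (u − u_i)^{−1} ]_−, where Q_m is expanded in non-negative powers of u_1, …, u_{i−1}, each (u − u_i)^{−1} is expanded in non-negative powers of u_i, and [⋯]_− keeps only monomials in which every variable has negative exponent. -/
/-!
Induct on the height of the tower. By the projection formula, pushing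
`∏_{i ≤ t+1} c_i^{a_i}` forward along the top map leaves `∏_{i ≤ t} c_i^{a_i} · π_*(c_{t+1}^N)`,
and the Segre assumption writes `π_*(c_{t+1}^N)` as a finite sum of pulled-back scalars times
`∏_m (m^t c_t + ⋯ + m^1 c_1)^{b_m}`. Expanding these powers multinomially, with
`C(d, |β|) · multinomial(β) = C(d, β)`, turns every summand into a pulled-back scalar times a
monomial in `c_1, …, c_t`; the monomial is absorbed into the exponents of the lower classes, the
scalar leaves the remaining push-forward by the projection formula, and induction applies.
Appending the top-level indices `(d_{t+1,m}, β_{t+1,m})` to the lower ones identifies the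
resulting double sum with the sum of `towerTerm`. Every sum is finite: `q_{m,d}` vanishes for
large `d`, and the exponent constraint then bounds all the indices.
-/

open scoped Classical

/-- Composite push-forward `P_1 ∘ P_2 ∘ ⋯ ∘ P_n : R_n → R_0` of a tower, where
`P i : R (i+1) → R i` abstracts the push-forward `π^{i+1}_*`. -/
def pushAll {R : ℕ → Type*} [∀ i, CommRing (R i)] (P : ∀ i, R (i + 1) →+ R i) :
    ∀ n, R n → R 0
  | 0, x => x
  | n + 1, x => pushAll P n (P n x)

/-- Composite pull-back `R_0 → R_n` of a tower, where `f i : R i → R (i+1)` abstracts the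
pull-back along `π^{i+1}`. -/
def pullTo {R : ℕ → Type*} [∀ i, CommRing (R i)] (f : ∀ i, R i →+* R (i + 1)) :
    ∀ n, R 0 →+* R n
  | 0 => RingHom.id _
  | n + 1 => (f n).comp (pullTo f n)

/-- The generalized multinomial coefficient
`C(d, β) = d(d-1)⋯(d-|β|+1) / (β^1! ⋯ β^{i-1}!) ∈ ℤ`, defined for any `d : ℤ` and any
vector `β` of natural numbers. -/
noncomputable def genMultinomial {ι : Type*} [Fintype ι] (d : ℤ) (β : ι → ℕ) : ℤ :=
  Ring.choose d (∑ j, β j) * Nat.multinomial Finset.univ β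

/-- The general term of the right-hand side of formula (1.5) (and of the more general (2.1)) of
the paper, as a function of a tuple `p = ((d_{i,m}), (β_{i,m}))`.  Here the Lean index
`i : Fin k` corresponds to the paper index `i+1 ∈ {1, …, k}`, `M` are the index sets of the
Segre data, `mv (i+1) m j = m^j` for `1 ≤ j ≤ i` are the integer vectors, `q (i+1) m d = q_{m,d}`
are the Laurent coefficients of `Q_m`, `extra (i+1) = Σ_{u ∈ A_{i+1}} n_{i+1,u}` records the
auxiliary exponents (zero when all `A_i` are empty), and `n (i+1) = n_{i+1}` are the exponents
of the tautological classes.  The `if` encodes the constraint fixing the exponent of each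
variable `u_{i+1}` to `-n_{i+1} - 1`, i.e. the truncation `[⋯]_-`. -/
noncomputable def towerTerm {R0 : Type*} [CommRing R0] (k : ℕ)
    (M : ℕ → Type) [∀ i, Fintype (M i)]
    (mv : ∀ i, M i → ℕ → ℤ) (q : ∀ i, M i → ℤ → R0)
    (extra : ℕ → ℤ) (n : ℕ → ℕ)
    (p : (∀ i : Fin k, M (i.1 + 1) → ℤ) × (∀ i : Fin k, M (i.1 + 1) → Fin i.1 → ℕ)) : R0 :=
  if ∀ i : Fin k,
      (∑ m, (p.1 i m - ∑ j, (p.2 i m j : ℤ)))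
        + (∑ i' : Fin k, ∑ m, if h : i.1 < i'.1 then (p.2 i' m ⟨i.1, h⟩ : ℤ) else 0)
        + extra (i.1 + 1)
      = -(n (i.1 + 1) : ℤ) - 1 then
    ∏ i : Fin k, ∏ m,
      q (i.1 + 1) m (p.1 i m) *
        ((genMultinomial (p.1 i m) (p.2 i m) *
            ∏ j : Fin i.1, mv (i.1 + 1) m (j.1 + 1) ^ p.2 i m j : ℤ) : R0)
  else 0

open Finset Function

theorem finsum_eq_finsum_sum_fiber {α β M : Type*} [AddCommMonoid M] (σ : β → α)
    (s : α → Finset β) (hs : ∀ a b, b ∈ s a ↔ σ b = a) {F : β → M}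
    (hF : (support F).Finite) :
    ∑ᶠ b, F b = ∑ᶠ a, ∑ b ∈ s a, F b := by
  set T := hF.toFinset
  have hsupp : (support fun a => ∑ b ∈ s a, F b) ⊆ T.image σ := by
    intro a ha
    obtain ⟨b, hb, hFb⟩ := exists_ne_zero_of_sum_ne_zero ha
    exact mem_image.2 ⟨b, hF.mem_toFinset.2 hFb, (hs a b).1 hb⟩
  rw [finsum_eq_sum_of_support_subset F (s := T) (by simp [T]),
    finsum_eq_sum_of_support_subset _ hsupp,
    ← sum_fiberwise_of_maps_to (g := σ) fun b hb => mem_image_of_mem σ hb]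
  refine sum_congr rfl fun a _ => sum_subset (fun b hb => ?_) fun b hb hbT => ?_
  · exact (hs a b).2 (mem_filter.1 hb).2
  · simpa [T, (hs a b).1 hb] using hbT

theorem support_mul_fiber_finite {α β R : Type*} [MulZeroClass R] {g : α → R}
    {h : α → β → R} (hg : (support g).Finite) (hh : ∀ a, (support (h a)).Finite) :
    (support fun ab : α × β => h ab.1 ab.2 * g ab.1).Finite := by
  refine (hg.biUnion fun a _ => (Set.finite_singleton a).prod (hh a)).subset ?_
  rintro ⟨a, b⟩ hab
  exact Set.mem_biUnion (right_ne_zero_of_mul hab) ⟨rfl, left_ne_zero_of_mul hab⟩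

theorem finsum_prod_mul_fiber {α β R : Type*} [NonUnitalNonAssocSemiring R] {g : α → R}
    {h : α → β → R} (hg : (support g).Finite) (hh : ∀ a, (support (h a)).Finite) :
    ∑ᶠ ab : α × β, h ab.1 ab.2 * g ab.1 = ∑ᶠ a, (∑ᶠ b, h a b) * g a := by
  rw [finsum_curry _ (support_mul_fiber_finite hg hh)]
  exact finsum_congr fun a => by rw [finsum_mul' _ _ (hh a)]

section Segre

variable {R₀ S ι J : Type*} [CommRing R₀] [CommRing S] [Fintype ι] [Fintype J]

noncomputable def segreCoeff (q : ι → ℤ → R₀) (a : ι → J → ℤ) (T : ℤ)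
    (dβ : (ι → ℤ) × (ι → J → ℕ)) : R₀ :=
  if ∑ m, (dβ.1 m - ∑ j, (dβ.2 m j : ℤ)) = T then
    ∏ m, q m (dβ.1 m) *
      ((genMultinomial (dβ.1 m) (dβ.2 m) * ∏ j, a m j ^ dβ.2 m j : ℤ) : R₀)
  else 0

theorem support_segreCoeff_finite {q : ι → ℤ → R₀}
    (hq : ∀ m, ∃ D : ℤ, ∀ d, D ≤ d → q m d = 0) (a : ι → J → ℤ) (T : ℤ) :
    (support (segreCoeff q a T)).Finite := by
  choose D hD using hq
  set Y := ∑ m, |D m|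
  refine ((Set.Finite.pi fun m => Set.finite_Icc (T - Y) (D m)).prod
    (Set.Finite.pi fun m => Set.Finite.pi fun j => Set.finite_Iic (Y - T).toNat)).subset ?_
  rintro ⟨d, β⟩ hdβ
  have hcond : ∑ m, (d m - ∑ j, (β m j : ℤ)) = T := by
    by_contra h
    exact hdβ (if_neg h)
  have hlt : ∀ m, d m < D m := fun m => by
    by_contra h
    refine hdβ ?_
    rw [segreCoeff, if_pos hcond]
    exact prod_eq_zero (mem_univ m) (by rw [hD m _ (not_lt.1 h), zero_mul])
  have hβ0 : ∀ m, (0 : ℤ) ≤ ∑ j, (β m j : ℤ) := fun m => sum_nonneg fun j _ => Nat.cast_nonneg _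
  have hβ : ∀ m j, (β m j : ℤ) ≤ ∑ j, (β m j : ℤ) := fun m j =>
    single_le_sum (fun j _ => Nat.cast_nonneg (β m j)) (mem_univ j)
  -- every summand of `∑ m, (|D m| - (d m - |β m|)) = Y - T` is nonnegative
  have hbound : ∀ m, |D m| - (d m - ∑ j, (β m j : ℤ)) ≤ Y - T := fun m => by
    rw [← hcond, ← sum_sub_distrib]
    refine single_le_sum (f := fun m => |D m| - (d m - ∑ j, (β m j : ℤ))) (fun m _ => ?_)
      (mem_univ m)
    linarith [le_abs_self (D m), hlt m, hβ0 m]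
  simp only [Set.mem_prod, Set.mem_univ_pi, Set.mem_Icc, Set.mem_Iic]
  refine ⟨fun m => ⟨?_, (hlt m).le⟩, fun m j => ?_⟩
  · linarith [hbound m, abs_nonneg (D m), hβ0 m]
  · have : (β m j : ℤ) ≤ Y - T := by linarith [hbound m, hβ m j, le_abs_self (D m), hlt m]
    omega

theorem mul_choose_mul_sum_pow_eq_sum_genMultinomial (φ : R₀ →+* S) (q₀ : R₀) (d : ℤ) (b : ℕ) (a : J → ℤ) (x : J → S) :
    φ q₀ * ((Ring.choose d b : ℤ) : S) * (∑ j, a j • x j) ^ b =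
      ∑ β ∈ piAntidiag univ b,
        φ (q₀ * ((genMultinomial d β * ∏ j, a j ^ β j : ℤ) : R₀)) * ∏ j, x j ^ β j := by
  rw [sum_pow_eq_sum_piAntidiag, mul_sum]
  refine sum_congr rfl fun β hβ => ?_
  obtain ⟨rfl, -⟩ := mem_piAntidiag.1 hβ
  simp only [genMultinomial, map_mul, map_intCast, map_natCast, map_prod, map_pow, Int.cast_mul,
    Int.cast_prod, Int.cast_pow, Int.cast_natCast, zsmul_eq_mul, mul_pow, prod_mul_distrib]
  ring

theorem ite_prod_choose_eq_sum_segreCoeff (φ : R₀ →+* S) (q : ι → ℤ → R₀) (a : ι → J → ℤ) (x : J → S)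
    (T : ℤ) (d : ι → ℤ) (b : ι → ℕ) :
    (if ∑ m, (d m - (b m : ℤ)) = T then
      ∏ m, (φ (q m (d m)) * ((Ring.choose (d m) (b m) : ℤ) : S) * (∑ j, a m j • x j) ^ b m)
    else 0) =
      ∑ β ∈ Fintype.piFinset fun m => piAntidiag univ (b m),
        φ (segreCoeff q a T (d, β)) * ∏ m, ∏ j, x j ^ β m j := by
  have hcond : ∀ β ∈ Fintype.piFinset fun m => piAntidiag (univ : Finset J) (b m),
      (∑ m, (d m - ∑ j, (β m j : ℤ)) = T ↔ ∑ m, (d m - (b m : ℤ)) = T) := fun β hβ => by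
    have hb : ∀ m, ∑ j, β m j = b m := fun m => (mem_piAntidiag.1 (Fintype.mem_piFinset.1 hβ m)).1
    simp only [← Nat.cast_sum, hb]
  split_ifs with h
  · simp_rw [mul_choose_mul_sum_pow_eq_sum_genMultinomial]
    rw [prod_univ_sum]
    refine sum_congr rfl fun β hβ => ?_
    rw [segreCoeff, if_pos ((hcond β hβ).2 h), map_prod, ← prod_mul_distrib]
  · refine (sum_eq_zero fun β hβ => ?_).symm
    rw [segreCoeff, if_neg (mt (hcond β hβ).1 h), map_zero, zero_mul]

theorem finsum_ite_prod_choose_eq_finsum_segreCoeff (φ : R₀ →+* S) {q : ι → ℤ → R₀}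
    (hq : ∀ m, ∃ D : ℤ, ∀ d, D ≤ d → q m d = 0) (a : ι → J → ℤ) (x : J → S) (T : ℤ) :
    ∑ᶠ db : (ι → ℤ) × (ι → ℕ),
      (if ∑ m, (db.1 m - (db.2 m : ℤ)) = T then
        ∏ m, (φ (q m (db.1 m)) * ((Ring.choose (db.1 m) (db.2 m) : ℤ) : S) *
          (∑ j, a m j • x j) ^ db.2 m)
      else 0) =
      ∑ᶠ dβ : (ι → ℤ) × (ι → J → ℕ), φ (segreCoeff q a T dβ) * ∏ m, ∏ j, x j ^ dβ.2 m j := by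
  rw [finsum_eq_finsum_sum_fiber (fun dβ => (dβ.1, fun m => ∑ j, dβ.2 m j))
    (fun db => {db.1} ×ˢ Fintype.piFinset fun m => piAntidiag univ (db.2 m))]
  · exact finsum_congr fun db => by rw [sum_product, sum_singleton, ite_prod_choose_eq_sum_segreCoeff]
  · rintro ⟨d, b⟩ ⟨d', β⟩
    simp only [mem_product, mem_singleton, Fintype.mem_piFinset, mem_piAntidiag, mem_univ,
      implies_true, and_true, Prod.ext_iff, funext_iff]
  · exact (support_segreCoeff_finite hq a T).subset
      ((support_mul_subset_left _ _).trans (support_comp_subset (map_zero φ) _))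

end Segre

abbrev TowerIdx (M : ℕ → Type) (t : ℕ) : Type :=
  (∀ i : Fin t, M (i.1 + 1) → ℤ) × (∀ i : Fin t, M (i.1 + 1) → Fin i.1 → ℕ)

def TowerIdx.snocEquiv (M : ℕ → Type) (t : ℕ) :
    ((M (t + 1) → ℤ) × (M (t + 1) → Fin t → ℕ)) × TowerIdx M t ≃ TowerIdx M (t + 1) :=
  (Equiv.prodProdProdComm _ _ _ _).trans
    ((Fin.snocEquiv fun i : Fin (t + 1) => M (i.1 + 1) → ℤ).prodCongr
      (Fin.snocEquiv fun i : Fin (t + 1) => M (i.1 + 1) → Fin i.1 → ℕ))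

-- `β m j` is an exponent of `c_{j+1}`, so the exponent of `c_i` is read off at `j = i - 1`.
def exponentShift {ι : Type*} [Fintype ι] {t : ℕ} (β : ι → Fin t → ℕ) (i : ℕ) : ℕ :=
  if h : i - 1 < t then ∑ m, β m ⟨i - 1, h⟩ else 0

theorem exponentShift_succ {ι : Type*} [Fintype ι] {t : ℕ} (β : ι → Fin t → ℕ) (j : Fin t) :
    exponentShift β (j.1 + 1) = ∑ m, β m j := by
  simp [exponentShift]

theorem towerTerm_snocEquiv {R₀ : Type*} [CommRing R₀] (t : ℕ) (M : ℕ → Type)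
    [∀ i, Fintype (M i)] (mv : ∀ i, M i → ℕ → ℤ) (q : ∀ i, M i → ℤ → R₀) (E : ℕ → ℤ)
    (n : ℕ → ℕ) (dβ : (M (t + 1) → ℤ) × (M (t + 1) → Fin t → ℕ)) (p : TowerIdx M t) :
    towerTerm (t + 1) M mv q E n (TowerIdx.snocEquiv M t (dβ, p)) =
      towerTerm t M mv q (fun i => E i + exponentShift dβ.2 i) n p *
        segreCoeff (q (t + 1)) (fun m j => mv (t + 1) m (j.1 + 1))
          (-(n (t + 1) : ℤ) - 1 - E (t + 1)) dβ := by
  obtain ⟨d, β⟩ := dβ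
  obtain ⟨p₁, p₂⟩ := p
  rw [towerTerm, towerTerm, segreCoeff, ite_zero_mul_ite_zero]
  simp only [TowerIdx.snocEquiv, Equiv.trans_apply, Equiv.prodProdProdComm_apply,
    Equiv.prodCongr_apply, Prod.map, Fin.snocEquiv_apply]
  congr 1
  · rw [Fin.forall_fin_succ', eq_iff_iff]
    refine and_congr (forall_congr' fun i => ?_) ?_
    · simp only [Fin.sum_univ_castSucc, Fin.snoc_castSucc, Fin.snoc_last, Fin.val_castSucc,
        Fin.val_last, i.isLt, dif_pos, Fin.eta, exponentShift_succ]
      push_cast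
      constructor <;> intro h <;> linarith
    · have hle : ∀ i : Fin (t + 1), ¬ t < i.1 := fun i => not_lt.2 (Nat.lt_succ_iff.1 i.isLt)
      simp only [Fin.snoc_last, Fin.val_last, hle, dite_false, sum_const_zero, add_zero]
      exact eq_sub_iff_add_eq.symm
  · rw [Fin.prod_univ_castSucc]
    simp only [Fin.snoc_castSucc, Fin.snoc_last]
    rfl

theorem prod_Icc_one_eq_prod_fin {G : Type*} [CommMonoid G] (t : ℕ) (F : ℕ → G) :
    ∏ i ∈ Icc 1 t, F i = ∏ j : Fin t, F (j.1 + 1) := by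
  rw [← Ico_add_one_right_eq_Icc, prod_Ico_eq_prod_range,
    Fin.prod_univ_eq_prod_range (fun i => F (i + 1))]
  simp [Nat.add_comm]

theorem sum_Icc_one_eq_sum_fin {G : Type*} [AddCommMonoid G] (t : ℕ) (F : ℕ → G) :
    ∑ i ∈ Icc 1 t, F i = ∑ j : Fin t, F (j.1 + 1) := by
  rw [← Ico_add_one_right_eq_Icc, sum_Ico_eq_sum_range,
    Fin.sum_univ_eq_sum_range (fun i => F (i + 1))]
  simp [Nat.add_comm]

theorem prod_Icc_pow_mul_prod_prod_pow {G ι : Type*} [CommMonoid G] [Fintype ι] {t : ℕ}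
    (x : ℕ → G) (e : ℕ → ℕ) (β : ι → Fin t → ℕ) :
    (∏ i ∈ Icc 1 t, x i ^ e i) * ∏ m, ∏ j : Fin t, x (j.1 + 1) ^ β m j =
      ∏ i ∈ Icc 1 t, x i ^ (e i + exponentShift β i) := by
  rw [prod_comm]
  simp_rw [prod_pow_eq_pow_sum]
  rw [prod_Icc_one_eq_prod_fin, prod_Icc_one_eq_prod_fin, ← prod_mul_distrib]
  exact prod_congr rfl fun j _ => by rw [← pow_add, exponentShift_succ]

def SegreAssumption {R : ℕ → Type*} [∀ i, CommRing (R i)] (f : ∀ i, R i →+* R (i + 1))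
    (P : ∀ i, R (i + 1) →+ R i) (c : ℕ → ∀ n', R n') (M : ℕ → Type) [∀ i, Fintype (M i)]
    (mv : ∀ i, M i → ℕ → ℤ) (q : ∀ i, M i → ℤ → R 0) (t : ℕ) : Prop :=
  ∀ N : ℕ, P t (c (t + 1) (t + 1) ^ N) =
    ∑ᶠ db : (M (t + 1) → ℤ) × (M (t + 1) → ℕ),
      if ∑ m, (db.1 m - (db.2 m : ℤ)) = -(N : ℤ) - 1 then
        ∏ m, (pullTo f t (q (t + 1) m (db.1 m)) * ((Ring.choose (db.1 m) (db.2 m) : ℤ) : R t) *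
          (∑ j ∈ Icc 1 t, mv (t + 1) m j • c j t) ^ db.2 m)
      else 0

section Pushforward

variable {R : ℕ → Type*} [∀ i, CommRing (R i)] {f : ∀ i, R i →+* R (i + 1)}
  {P : ∀ i, R (i + 1) →+ R i}

def pushAllHom (P : ∀ i, R (i + 1) →+ R i) : ∀ n, R n →+ R 0
  | 0 => AddMonoidHom.id _
  | n + 1 => (pushAllHom P n).comp (P n)

theorem coe_pushAllHom (P : ∀ i, R (i + 1) →+ R i) : ∀ n, ⇑(pushAllHom P n) = pushAll P n
  | 0 => rfl
  | n + 1 => by rw [pushAllHom, AddMonoidHom.coe_comp, coe_pushAllHom P n]; rfl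

theorem pushAll_finsum {α : Type*} {t : ℕ} {g : α → R t} (hg : (support g).Finite) :
    pushAll P t (∑ᶠ a, g a) = ∑ᶠ a, pushAll P t (g a) := by
  rw [← coe_pushAllHom]
  exact (pushAllHom P t).map_finsum hg

theorem pushAll_pullTo_mul (hproj : ∀ i (a : R i) (b : R (i + 1)), P i (f i a * b) = a * P i b)
    (r : R 0) : ∀ t (y : R t), pushAll P t (pullTo f t r * y) = r * pushAll P t y
  | 0, _ => rfl
  | t + 1, y => by
    rw [pushAll, pullTo, RingHom.comp_apply, hproj, pushAll_pullTo_mul hproj r t, pushAll]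

theorem pushAll_succ_prod_pow
    (hproj : ∀ i (a : R i) (b : R (i + 1)), P i (f i a * b) = a * P i b)
    {c : ℕ → ∀ n', R n'} {t : ℕ} (hc : ∀ i, 1 ≤ i → i ≤ t → c i (t + 1) = f t (c i t))
    {M : ℕ → Type} [∀ i, Fintype (M i)] {mv : ∀ i, M i → ℕ → ℤ} {q : ∀ i, M i → ℤ → R 0}
    (hq : ∀ m : M (t + 1), ∃ D : ℤ, ∀ d : ℤ, D ≤ d → q (t + 1) m d = 0)
    (hSegre : SegreAssumption f P c M mv q t)
    (n e : ℕ → ℕ) :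
    pushAll P (t + 1) (∏ i ∈ Icc 1 (t + 1), c i (t + 1) ^ (n i + e i)) =
      ∑ᶠ dβ : (M (t + 1) → ℤ) × (M (t + 1) → Fin t → ℕ),
        pushAll P t (∏ i ∈ Icc 1 t, c i t ^ (n i + (e i + exponentShift dβ.2 i))) *
          segreCoeff (q (t + 1)) (fun m j => mv (t + 1) m (j.1 + 1))
            (-(n (t + 1) : ℤ) - 1 - e (t + 1)) dβ := by
  set coeff := segreCoeff (q (t + 1)) (fun m (j : Fin t) => mv (t + 1) m (j.1 + 1))
    (-(n (t + 1) : ℤ) - 1 - e (t + 1))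
  set X := ∏ i ∈ Icc 1 t, c i t ^ (n i + e i)
  have hsplit : ∏ i ∈ Icc 1 (t + 1), c i (t + 1) ^ (n i + e i) =
      f t X * c (t + 1) (t + 1) ^ (n (t + 1) + e (t + 1)) := by
    rw [prod_Icc_succ_top (by omega), map_prod]
    exact congrArg (· * _) (prod_congr rfl fun i hi => by
      rw [hc i (mem_Icc.1 hi).1 (mem_Icc.1 hi).2, map_pow])
  have hexpand : P t (c (t + 1) (t + 1) ^ (n (t + 1) + e (t + 1))) =
      ∑ᶠ dβ, pullTo f t (coeff dβ) * ∏ m, ∏ j : Fin t, c (j.1 + 1) t ^ dβ.2 m j := by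
    have hT : -((n (t + 1) + e (t + 1) : ℕ) : ℤ) - 1 = -(n (t + 1) : ℤ) - 1 - e (t + 1) := by
      push_cast
      ring
    rw [hSegre, hT]
    simp_rw [sum_Icc_one_eq_sum_fin]
    exact finsum_ite_prod_choose_eq_finsum_segreCoeff (pullTo f t) hq _ _ _
  have hfin : (support fun dβ => pullTo f t (coeff dβ) *
      ∏ m, ∏ j : Fin t, c (j.1 + 1) t ^ dβ.2 m j).Finite :=
    (support_segreCoeff_finite hq _ _ : (support coeff).Finite).subset
      ((support_mul_subset_left _ _).trans (support_comp_subset (map_zero _) _))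
  rw [hsplit, pushAll, hproj, hexpand, mul_finsum' _ _ hfin,
    pushAll_finsum (hfin.subset (support_mul_subset_right _ _))]
  refine finsum_congr fun dβ => ?_
  rw [mul_left_comm, pushAll_pullTo_mul hproj, mul_comm, prod_Icc_pow_mul_prod_prod_pow]
  simp only [add_assoc]

theorem towerTerm_support_finite_and_pushAll_eq {k : ℕ}
    (hproj : ∀ i (a : R i) (b : R (i + 1)), P i (f i a * b) = a * P i b)
    {c : ℕ → ∀ n', R n'}
    (hc : ∀ i' n', 1 ≤ i' → i' ≤ n' → n' < k → c i' (n' + 1) = f n' (c i' n'))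
    {M : ℕ → Type} [∀ i, Fintype (M i)] {mv : ∀ i, M i → ℕ → ℤ} {q : ∀ i, M i → ℤ → R 0}
    (hq : ∀ i, 1 ≤ i → i ≤ k → ∀ m : M i, ∃ D : ℤ, ∀ d : ℤ, D ≤ d → q i m d = 0)
    (hSegre : ∀ i < k, SegreAssumption f P c M mv q i) (n : ℕ → ℕ) :
    ∀ t ≤ k, ∀ e : ℕ → ℕ,
      (support (towerTerm t M mv q (fun i => (e i : ℤ)) n)).Finite ∧
      pushAll P t (∏ i ∈ Icc 1 t, c i t ^ (n i + e i)) =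
        ∑ᶠ p, towerTerm t M mv q (fun i => (e i : ℤ)) n p
  | 0, _, e => by
    have hp : ∀ p : TowerIdx M 0, p = (finZeroElim, finZeroElim) := fun p =>
      Prod.ext (funext finZeroElim) (funext finZeroElim)
    refine ⟨Set.toFinite _, ?_⟩
    rw [finsum_eq_single _ (finZeroElim, finZeroElim) fun p h => absurd (hp p) h]
    simp [towerTerm, pushAll]
  | t + 1, ht, e => by
    have ih := fun β : M (t + 1) → Fin t → ℕ =>
      towerTerm_support_finite_and_pushAll_eq hproj hc hq hSegre n t (by omega)
        (fun i => e i + exponentShift β i)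
    set coeff := segreCoeff (q (t + 1)) (fun m (j : Fin t) => mv (t + 1) m (j.1 + 1))
      (-(n (t + 1) : ℤ) - 1 - e (t + 1))
    have hcoeff : (support coeff).Finite :=
      support_segreCoeff_finite (hq (t + 1) (by omega) ht) _ _
    have hterm : ∀ x, towerTerm (t + 1) M mv q (fun i => (e i : ℤ)) n (TowerIdx.snocEquiv M t x) =
        towerTerm t M mv q (fun i => ((e i + exponentShift x.1.2 i : ℕ) : ℤ)) n x.2 *
          coeff x.1 := fun x => by
      rw [towerTerm_snocEquiv]
      push_cast
      rfl
    have hfin := support_mul_fiber_finite hcoeff fun dβ => (ih dβ.2).1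
    constructor
    · refine (hfin.image (TowerIdx.snocEquiv M t)).subset fun p hp =>
        ⟨(TowerIdx.snocEquiv M t).symm p, ?_, Equiv.apply_symm_apply _ _⟩
      rwa [mem_support, ← hterm, Equiv.apply_symm_apply]
    · rw [pushAll_succ_prod_pow hproj (fun i h1 h2 => hc i t h1 h2 (by omega))
        (hq (t + 1) (by omega) ht) (hSegre t (by omega)), ← finsum_comp_equiv
        (TowerIdx.snocEquiv M t)]
      simp_rw [hterm]
      rw [finsum_prod_mul_fiber hcoeff fun dβ => (ih dβ.2).1]
      exact finsum_congr fun dβ => by rw [(ih dβ.2).2]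

end Pushforward

theorem pushforward_tower_full_general
    {k : ℕ}
    (R : ℕ → Type*) [∀ i, CommRing (R i)]
    (f : ∀ i, R i →+* R (i + 1))
    (P : ∀ i, R (i + 1) →+ R i)
    (hproj : ∀ i (a : R i) (b : R (i + 1)), P i (f i a * b) = a * P i b)
    (c : ℕ → ∀ n', R n')
    (hc : ∀ i' n', 1 ≤ i' → i' ≤ n' → n' < k → c i' (n' + 1) = f n' (c i' n'))
    (M : ℕ → Type) [∀ i, Fintype (M i)]
    (mv : ∀ i, M i → ℕ → ℤ)
    (q : ∀ i, M i → ℤ → R 0)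
    (hq : ∀ i, 1 ≤ i → i ≤ k → ∀ m : M i, ∃ D : ℤ, ∀ d : ℤ, D ≤ d → q i m d = 0)
    (A : ℕ → Type) [∀ i, Fintype (A i)]
    (na : ∀ i, A i → ℕ)
    (hSegre : ∀ i, i < k → ∀ n : ℕ,
      P i ((c (i + 1) (i + 1)) ^ n) =
        ∑ᶠ db : (M (i + 1) → ℤ) × (M (i + 1) → ℕ),
          if (∑ m, (db.1 m - (db.2 m : ℤ))) = -(n : ℤ) - 1 then
            ∏ m, (pullTo f i (q (i + 1) m (db.1 m)) *
              ((Ring.choose (db.1 m) (db.2 m) : ℤ) : R i) *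
              (∑ j ∈ Finset.Icc 1 i, mv (i + 1) m j • c j i) ^ (db.2 m))
          else 0)
    (n : ℕ → ℕ) :
    (Function.support (towerTerm k M mv q (fun i => ∑ u : A i, (na i u : ℤ)) n)).Finite ∧
    pushAll P k (∏ i' ∈ Finset.Icc 1 k, c i' k ^ (n i' + ∑ u : A i', na i' u)) =
      ∑ᶠ p, towerTerm k M mv q (fun i => ∑ u : A i, (na i u : ℤ)) n p := by
  have h := towerTerm_support_finite_and_pushAll_eq hproj hc hq hSegre n k le_rfl
    (fun i => ∑ u : A i, na i u)
  push_cast at h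
  exact h

/-- **Theorem 2.1 of the paper** (full version with auxiliary variables), stated
coefficient-wise.  For each `1 ≤ i ≤ k`, `A i` is a finite set and `na i u` a nonnegative
integer for each `u : A i`; the class pushed forward is
`Π_{i=1}^k c_i^{n_i + Σ_{u ∈ A_i} n_{i,u}}`, and the constraint of the truncation acquires the
extra summand `Σ_{u ∈ A_i} n_{i,u}`, coming from extracting the coefficient of
`Π_i u_i^{-n_i-1} Π_{u ∈ A_i} u^{-n_{i,u}-1}` in
`π_* Π_i ((u_i - c_i)^{-1} Π_{u ∈ A_i} (u - c_i)^{-1}) =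
[Π_i Π_{m ∈ M_i} Q_m(u_i + m^{i-1}u_{i-1} + ⋯ + m^1 u_1) Π_{u ∈ A_i} (u - u_i)^{-1}]_-`.  A formal push-forward tower consists of commutative rings `R 0, …, R k`,
pull-backs `f`, push-forwards `P` satisfying the projection formula, and tautological classes:
`c i' n'` denotes the image in `R n'` of the tautological class `c_{i'} ∈ R_{i'}` (for
`1 ≤ i' ≤ n' ≤ k`), these images being compatible under pull-back and nilpotent.  The Segre
data consists of finite index sets `M`, integer vectors `mv` and Laurent coefficients `q`
(vanishing in large degrees) of the series `Q_m`; the Segre assumption `hSegre` says that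
`P_{i+1}(c_{i+1}^n)` is the coefficient of `u^{-n-1}` in
`Π_{m ∈ M_{i+1}} Q_m(u + m^i c_i + ⋯ + m^1 c_1)`, each `Q_m` expanded in non-negative powers of
the nilpotent element `m^i c_i + ⋯ + m^1 c_1`.  The conclusion: only finitely many tuples
contribute a nonzero term, and `(P_1 ∘ ⋯ ∘ P_k)(c_1^{n_1} ⋯ c_k^{n_k})` equals the sum of all
the terms, i.e. the coefficient of `u_1^{-n_1-1} ⋯ u_k^{-n_k-1}` in
`[Π_{i=1}^k Π_{m ∈ M_i} Q_m(u_i + m^{i-1} u_{i-1} + ⋯ + m^1 u_1)]_-`. -/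
theorem pushforward_tower_full
    {k : ℕ} (hk : 1 ≤ k)
    (R : ℕ → Type*) [∀ i, CommRing (R i)]
    (f : ∀ i, R i →+* R (i + 1))
    (P : ∀ i, R (i + 1) →+ R i)
    (hproj : ∀ i (a : R i) (b : R (i + 1)), P i (f i a * b) = a * P i b)
    (c : ℕ → ∀ n', R n')
    (hc : ∀ i' n', 1 ≤ i' → i' ≤ n' → n' < k → c i' (n' + 1) = f n' (c i' n'))
    (hnil : ∀ i' n', 1 ≤ i' → i' ≤ n' → n' ≤ k → IsNilpotent (c i' n'))
    (M : ℕ → Type) [∀ i, Fintype (M i)]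
    (mv : ∀ i, M i → ℕ → ℤ)
    (q : ∀ i, M i → ℤ → R 0)
    (hq : ∀ i, 1 ≤ i → i ≤ k → ∀ m : M i, ∃ D : ℤ, ∀ d : ℤ, D ≤ d → q i m d = 0)
    (A : ℕ → Type) [∀ i, Fintype (A i)]
    (na : ∀ i, A i → ℕ)
    (hSegre : ∀ i, i < k → ∀ n : ℕ,
      P i ((c (i + 1) (i + 1)) ^ n) =
        ∑ᶠ db : (M (i + 1) → ℤ) × (M (i + 1) → ℕ),
          if (∑ m, (db.1 m - (db.2 m : ℤ))) = -(n : ℤ) - 1 then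
            ∏ m, (pullTo f i (q (i + 1) m (db.1 m)) *
              ((Ring.choose (db.1 m) (db.2 m) : ℤ) : R i) *
              (∑ j ∈ Finset.Icc 1 i, mv (i + 1) m j • c j i) ^ (db.2 m))
          else 0)
    (n : ℕ → ℕ) :
    (Function.support (towerTerm k M mv q (fun i => ∑ u : A i, (na i u : ℤ)) n)).Finite ∧
    pushAll P k (∏ i' ∈ Finset.Icc 1 k, c i' k ^ (n i' + ∑ u : A i', na i' u)) =
      ∑ᶠ p, towerTerm k M mv q (fun i => ∑ u : A i, (na i u : ℤ)) n p :=
  pushforward_tower_full_general R f P hproj c hc M mv q hq A na hSegre n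
end

section
/- Inductive step of the proof of Theorem 2.1 (the identity Z_j = Z_{j−1}, equation (2.2), in single-step algebraic form): Let R and R' be commutative rings, f : R → R' a ring homomorphism, P : R' → R an additive map satisfying the projection formula P(f(a)·b) = a·P(b) for all a ∈ R, b ∈ R', and let c ∈ R' be nilpotent. Suppose s_n ∈ R (n ≥ 0) are elements with P(c^n) = s_n for all n ≥ 0 (the coefficients of the Segre series of P). Let T be a finite index set and, for each t ∈ T, let m_t ∈ ℤ and let a_{t,d} ∈ R (d ∈ ℤ) be coefficients with a_{t,d} = 0 for all sufficiently large d (encoding a Laurent series F_t(v) = Σ_d a_{t,d} v^d). Let A be a finite set with nonnegative integers n_u for u ∈ A. Then for every nonnegative integer n and all integers (e_t)_{t ∈ T}: P( c^{ n + Σ_{u ∈ A} n_u } · Π_{t ∈ T} ( Σ_{β ≥ 0} f(a_{t, e_t + β}) · C(e_t + β, β) · m_t^{β} · c^{β} ) ) = Σ_{(β_t)_{t ∈ T} ∈ ℕ^T} s_{ n + Σ_{u ∈ A} n_u + Σ_{t ∈ T} β_t } · Π_{t ∈ T} a_{t, e_t + β_t} · C(e_t + β_t, β_t) · m_t^{β_t},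 where all sums have only finitely many nonzero terms. (The inner factor Σ_{β ≥ 0} a_{t, e_t + β} C(e_t + β, β) m_t^{β} c^{β} is the coefficient of v_t^{e_t} in F_t(v_t + m_t c), expanded in non-negative powers of c; the identity expresses that push-forward along one step of the tower replaces c by the formal variable u_j, multiplies by the Segre series of that step, and commutes with the truncation [⋯]_−.) -/
/-!
Since `c ^ N = 0`, every power series in `c` is a polynomial of degree `< N`, so the product over
`t` expands into finitely many monomials `f (∏ t, b t (β t)) * c ^ (k + ∑ t, β t)`. The projection
formula pulls the coefficient out of `P`, leaving `s (k + ∑ t, β t)`; the same vanishing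
`s j = P (c ^ j) = 0` for `j ≥ N` makes the resulting sum over `β : T → ℕ` finite.
-/

open Finset Function

section NilpotentExpansion

variable {R R' T : Type*} [CommSemiring R] [CommSemiring R'] [Fintype T]

theorem support_mul_pow_subset_range {c : R'} {N : ℕ} (hN : c ^ N = 0) (g : ℕ → R') :
    (support fun β : ℕ => g β * c ^ β) ⊆ ↑(range N) := by
  intro β hβ
  by_contra hβN
  apply hβ
  dsimp only
  rw [pow_eq_zero_of_le (not_lt.mp (by simpa using hβN)) hN, mul_zero]

theorem support_mul_comp_add_sum_subset_piFinset [DecidableEq T] {s : ℕ → R} {N : ℕ}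
    (hs : ∀ j, N ≤ j → s j = 0) (k : ℕ) (g : (T → ℕ) → R) :
    (support fun β : T → ℕ => s (k + ∑ t, β t) * g β) ⊆
      ↑(Fintype.piFinset fun _ : T => range N) := by
  intro β hβ
  by_contra hβN
  obtain ⟨t, ht⟩ : ∃ t, N ≤ β t := by simpa [Fintype.mem_piFinset] using hβN
  have hle : N ≤ k + ∑ t, β t := ht.trans <|
    (single_le_sum (fun _ _ => Nat.zero_le _) (mem_univ t)).trans (Nat.le_add_left _ _)
  apply hβ
  dsimp only
  rw [hs _ hle, zero_mul]

theorem map_pow_mul_prod_finsum_mul_pow (f : R →+* R') (P : R' →+ R)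
    (hproj : ∀ a b, P (f a * b) = a * P b) {c : R'} {N : ℕ} (hN : c ^ N = 0)
    (k : ℕ) (b : T → ℕ → R) :
    P (c ^ k * ∏ t, ∑ᶠ β : ℕ, f (b t β) * c ^ β) =
      ∑ᶠ β : T → ℕ, P (c ^ (k + ∑ t, β t)) * ∏ t, b t (β t) := by
  classical
  have hP : ∀ j, N ≤ j → P (c ^ j) = 0 := fun j hj => by
    rw [pow_eq_zero_of_le hj hN, map_zero]
  rw [finsum_eq_sum_of_support_subset _ (support_mul_comp_add_sum_subset_piFinset hP k _)]
  simp only [fun t => finsum_eq_sum_of_support_subset _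
    (support_mul_pow_subset_range hN fun β => f (b t β))]
  rw [prod_univ_sum, mul_sum, map_sum]
  refine sum_congr rfl fun β _ => ?_
  calc P (c ^ k * ∏ t, f (b t (β t)) * c ^ β t)
      = P (f (∏ t, b t (β t)) * c ^ (k + ∑ t, β t)) := by
        rw [prod_mul_distrib, prod_pow_eq_pow_sum, map_prod, pow_add]
        congr 1
        ring
    _ = P (c ^ (k + ∑ t, β t)) * ∏ t, b t (β t) := by rw [hproj, mul_comm]

end NilpotentExpansion

theorem pushforward_tower_inductive_step_general
    (R R' : Type*) [CommRing R] [CommRing R']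
    (f : R →+* R') (P : R' →+ R)
    (hproj : ∀ (a : R) (b : R'), P (f a * b) = a * P b)
    (c : R') (hc : IsNilpotent c)
    (s : ℕ → R) (hs : ∀ n : ℕ, P (c ^ n) = s n)
    (T : Type) [Fintype T]
    (m : T → ℤ) (a : T → ℤ → R)
    (A : Type) [Fintype A] (na : A → ℕ)
    (n : ℕ) (e : T → ℤ) :
    (∀ t, (Function.support fun β : ℕ =>
        f (a t (e t + β)) * ((Ring.choose (e t + (β : ℤ)) β * m t ^ β : ℤ) : R') * c ^ β).Finite)
    ∧
    (Function.support fun β : T → ℕ =>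
        s (n + ∑ u, na u + ∑ t, β t) *
          ∏ t, a t (e t + β t) *
            ((Ring.choose (e t + (β t : ℤ)) (β t) * m t ^ β t : ℤ) : R)).Finite
    ∧
    P (c ^ (n + ∑ u, na u) *
        ∏ t, ∑ᶠ β : ℕ,
          f (a t (e t + β)) * ((Ring.choose (e t + (β : ℤ)) β * m t ^ β : ℤ) : R') * c ^ β) =
      ∑ᶠ β : T → ℕ,
        s (n + ∑ u, na u + ∑ t, β t) *
          ∏ t, a t (e t + β t) *
            ((Ring.choose (e t + (β t : ℤ)) (β t) * m t ^ β t : ℤ) : R) := by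
  classical
  obtain ⟨N, hN⟩ := hc
  have hsN : ∀ j, N ≤ j → s j = 0 := fun j hj => by
    rw [← hs, pow_eq_zero_of_le hj hN, map_zero]
  have hcoeff : ∀ t (β : ℕ),
      f (a t (e t + β)) * ((Ring.choose (e t + (β : ℤ)) β * m t ^ β : ℤ) : R') =
        f (a t (e t + β) * ((Ring.choose (e t + (β : ℤ)) β * m t ^ β : ℤ) : R)) := by
    intro t β
    rw [map_mul, map_intCast]
  refine ⟨fun t => (range N).finite_toSet.subset (support_mul_pow_subset_range hN _),
    (Fintype.piFinset _).finite_toSet.subset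
      (support_mul_comp_add_sum_subset_piFinset hsN _ _), ?_⟩
  simp only [hcoeff, map_pow_mul_prod_finsum_mul_pow f P hproj hN, hs]

/-- **The inductive step `Z_j = Z_{j-1}` (equation (2.2)) of the proof of Theorem 2.1**, in
single-step algebraic form.  Here `P : R' →+ R` abstracts the push-forward `π^j_*` (an additive
map satisfying the projection formula `hproj`), `c` abstracts the nilpotent tautological class
`c_j`, `s n = P (c^n)` are the coefficients of the Segre series of the step, and for each `t` in
the finite index set `T`, `F_t(v) = Σ_d a_{t,d} v^d` is a Laurent series with coefficients in
`R` (vanishing in large degrees) together with an integer `m_t`, abstracting the factors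
`Q_{m_i}` viewed in the single variable `u_i` (`i > j`).  The inner factor
`Σ_{β ≥ 0} a_{t, e_t + β} C(e_t + β, β) m_t^β c^β` is the coefficient of `v_t^{e_t}` in
`F_t(v_t + m_t c)` expanded in non-negative powers of `c`; the conclusion states that all the
displayed sums have finite support and that pushing forward
`c^{n + Σ_u n_u} · Π_t (coefficient of v_t^{e_t} in F_t(v_t + m_t c))` yields
`Σ_{(β_t)} s_{n + Σ_u n_u + Σ_t β_t} Π_t a_{t, e_t + β_t} C(e_t + β_t, β_t) m_t^{β_t}`.
`Ring.choose d β` is the generalized binomial coefficient `C(d, β) = d(d-1)⋯(d-β+1)/β!`. -/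
theorem pushforward_tower_inductive_step
    (R R' : Type*) [CommRing R] [CommRing R']
    (f : R →+* R') (P : R' →+ R)
    (hproj : ∀ (a : R) (b : R'), P (f a * b) = a * P b)
    (c : R') (hc : IsNilpotent c)
    (s : ℕ → R) (hs : ∀ n : ℕ, P (c ^ n) = s n)
    (T : Type) [Fintype T]
    (m : T → ℤ) (a : T → ℤ → R)
    (ha : ∀ t, ∃ D : ℤ, ∀ d : ℤ, D ≤ d → a t d = 0)
    (A : Type) [Fintype A] (na : A → ℕ)
    (n : ℕ) (e : T → ℤ) :
    (∀ t, (Function.support fun β : ℕ =>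
        f (a t (e t + β)) * ((Ring.choose (e t + (β : ℤ)) β * m t ^ β : ℤ) : R') * c ^ β).Finite)
    ∧
    (Function.support fun β : T → ℕ =>
        s (n + ∑ u, na u + ∑ t, β t) *
          ∏ t, a t (e t + β t) *
            ((Ring.choose (e t + (β t : ℤ)) (β t) * m t ^ β t : ℤ) : R)).Finite
    ∧
    P (c ^ (n + ∑ u, na u) *
        ∏ t, ∑ᶠ β : ℕ,
          f (a t (e t + β)) * ((Ring.choose (e t + (β : ℤ)) β * m t ^ β : ℤ) : R') * c ^ β) =
      ∑ᶠ β : T → ℕ,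
        s (n + ∑ u, na u + ∑ t, β t) *
          ∏ t, a t (e t + β t) *
            ((Ring.choose (e t + (β t : ℤ)) (β t) * m t ^ β t : ℤ) : R) :=
  pushforward_tower_inductive_step_general R R' f P hproj c hc s hs T m a A na n e
end
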